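/- arXiv:1108.3382 — 2 statements merged into one kernel-verified Lean document; each statement's English description precedes it below -/
import Mathlib

section
/- Let R be a commutative ring and let m₁, m₂, m₃ be 2×2 matrices over R with det(m₁) = 1. Then UR(m₂·m₁) · UR(m₁·m₃) = UR(m₁) · UR(m₂·m₁·m₃) + UR(m₂) · UR(m₃). (This is the first matrix identity of Lemma 5.4 of the paper, used to prove the skein relation for two crossing generalized arcs.) -/
theorem Matrix.skein_fin_two {R : Type*} [CommRing R] (a m b : Matrix (Fin 2) (Fin 2) R) :
    (a * m) 0 1 * (m * b) 0 1 = m 0 1 * (a * m * b) 0 1 + m.det * (a 0 1 * b 0 1) := by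
  simp only [Matrix.det_fin_two, Matrix.mul_apply, Fin.sum_univ_two]
  ring

/-- **Lemma 5.4, first identity** (Musiker–Williams, "Matrix formulae and skein
relations for cluster algebras from surfaces").
For 2×2 matrices `m₁, m₂, m₃` over a commutative ring with `det m₁ = 1`,
`UR(m₂·m₁) · UR(m₁·m₃) = UR(m₁) · UR(m₂·m₁·m₃) + UR(m₂) · UR(m₃)`,
where `UR` denotes the upper-right entry. -/
theorem UR_skein_identity {R : Type*} [CommRing R]
    (m₁ m₂ m₃ : Matrix (Fin 2) (Fin 2) R) (h : m₁.det = 1) :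
    (m₂ * m₁) 0 1 * (m₁ * m₃) 0 1 =
      m₁ 0 1 * (m₂ * m₁ * m₃) 0 1 + m₂ 0 1 * m₃ 0 1 := by
  rw [Matrix.skein_fin_two, h, one_mul]
end

section
/- For every integer d ≥ 1 and every direction word f : {1,…,d−1} → {N,E}, the snake graph G(f) has exactly two perfect matchings consisting entirely of boundary edges; moreover exactly one of these two matchings contains the bottom edge of tile 1, and the other contains the left edge of tile 1. (This is the claim, asserted by induction on the number of tiles in Definition 3.6 of the paper, that defines the minimal and maximal matchings P₋ and P₊.) -/
open scoped Classical

namespace Snake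

/-- An edge of a snake graph: a lattice point `v` together with a Boolean,
`true` meaning the horizontal unit segment from `v` to `v + (1,0)`, and
`false` meaning the vertical unit segment from `v` to `v + (0,1)`. -/
abbrev Edge := (ℤ × ℤ) × Bool

/-- The step between consecutive tile positions: `(0,1)` for a
north-pointing step (`true` = N) and `(1,0)` for an east-pointing step
(`false` = E). -/
def step (b : Bool) : ℤ × ℤ := if b then (0, 1) else (1, 0)

/-- Tile positions of the snake graph determined by the direction word `f`
(`f j = true` means `f(j) = N`, `f j = false` means `f(j) = E`):
`pos f j` is the lower-left corner `p_j` of tile `j` (for `j ≥ 1`), with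
`p_1 = (0,0)` and `p_{j+1} = p_j + step (f j)`. -/
def pos (f : ℕ → Bool) : ℕ → ℤ × ℤ
  | 0 => (0, 0)
  | 1 => (0, 0)
  | j + 2 => pos f (j + 1) + step (f (j + 1))

/-- The bottom edge of the unit tile with lower-left corner `p`. -/
def bottomEdge (p : ℤ × ℤ) : Edge := (p, true)

/-- The left edge of the unit tile with lower-left corner `p`. -/
def leftEdge (p : ℤ × ℤ) : Edge := (p, false)

/-- The top edge of the unit tile with lower-left corner `p`. -/
def topEdge (p : ℤ × ℤ) : Edge := (p + (0, 1), true)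

/-- The right edge of the unit tile with lower-left corner `p`. -/
def rightEdge (p : ℤ × ℤ) : Edge := (p + (1, 0), false)

/-- The four edges of the unit tile with lower-left corner `p`. -/
def tileEdges (p : ℤ × ℤ) : Finset Edge :=
  {bottomEdge p, topEdge p, leftEdge p, rightEdge p}

/-- The four corners of the unit tile with lower-left corner `p`. -/
def tileCorners (p : ℤ × ℤ) : Finset (ℤ × ℤ) :=
  {p, p + (1, 0), p + (0, 1), p + (1, 1)}

/-- The edge set of the snake graph `G(f)` with `d` tiles. -/
def snakeEdges (d : ℕ) (f : ℕ → Bool) : Finset Edge :=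
  (Finset.Icc 1 d).biUnion fun j => tileEdges (pos f j)

/-- The vertex set of the snake graph `G(f)` with `d` tiles. -/
def snakeVertices (d : ℕ) (f : ℕ → Bool) : Finset (ℤ × ℤ) :=
  (Finset.Icc 1 d).biUnion fun j => tileCorners (pos f j)

/-- The two endpoints of an edge. -/
def endpoints (e : Edge) : Finset (ℤ × ℤ) :=
  {e.1, e.1 + (if e.2 then ((1 : ℤ), (0 : ℤ)) else (0, 1))}

/-- `P` is a perfect matching of the snake graph with `d` tiles: a set of
edges of the graph covering every vertex exactly once. -/
def IsPerfectMatching (d : ℕ) (f : ℕ → Bool) (P : Finset Edge) : Prop :=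
  P ⊆ snakeEdges d f ∧
    ∀ v ∈ snakeVertices d f, (P.filter fun e => v ∈ endpoints e).card = 1

/-- A boundary edge of the snake graph: an edge lying on exactly one tile. -/
def IsBoundaryEdge (d : ℕ) (f : ℕ → Bool) (e : Edge) : Prop :=
  ((Finset.Icc 1 d).filter fun j => e ∈ tileEdges (pos f j)).card = 1

end Snake

open Snake

namespace SnakeAux

lemma mem_tileEdges {e : Edge} {p : ℤ × ℤ} :
    e ∈ tileEdges p ↔ e = (p, true) ∨ e = (p + (0,1), true) ∨ e = (p, false) ∨ e = (p + (1,0), false) := by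
  simp [tileEdges, bottomEdge, topEdge, leftEdge, rightEdge]

lemma mem_tileCorners {v p : ℤ × ℤ} :
    v ∈ tileCorners p ↔ v = p ∨ v = p + (1,0) ∨ v = p + (0,1) ∨ v = p + (1,1) := by
  simp [tileCorners]

lemma mem_endpoints {v : ℤ × ℤ} {e : Edge} :
    v ∈ endpoints e ↔ v = e.1 ∨ v = e.1 + (if e.2 then ((1:ℤ), (0:ℤ)) else (0, 1)) := by
  simp [endpoints]

lemma endpoints_subset {e : Edge} {p : ℤ × ℤ} (he : e ∈ tileEdges p) :
    ∀ v ∈ endpoints e, v ∈ tileCorners p := by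
  intro v hv
  rcases mem_tileEdges.1 he with rfl | rfl | rfl | rfl <;>
    rcases mem_endpoints.1 hv with rfl | rfl <;>
      simp [mem_tileCorners, Prod.ext_iff] <;> try omega

lemma pos_one (f : ℕ → Bool) : pos f 1 = (0, 0) := rfl

lemma pos_succ (f : ℕ → Bool) {j : ℕ} (hj : 1 ≤ j) :
    pos f (j + 1) = pos f j + step (f j) := by
  cases j with
  | zero => omega
  | succ k => rfl

lemma pos_sum (f : ℕ → Bool) : ∀ j : ℕ, 1 ≤ j → (pos f j).1 + (pos f j).2 = (j : ℤ) - 1 := by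
  intro j
  induction j with
  | zero => omega
  | succ k ih =>
    intro _
    rcases Nat.eq_or_lt_of_le (Nat.one_le_iff_ne_zero.mpr (Nat.succ_ne_zero k)) with h | h
    · have : k = 0 := by omega
      subst this; simp [pos_one]
    · have hk : 1 ≤ k := by omega
      rw [pos_succ f hk]
      have := ih hk
      cases f k <;> simp [step, Prod.fst_add, Prod.snd_add] <;> push_cast <;> omega

end SnakeAux

namespace SnakeAux

lemma mem_tileEdges_sum {e : Edge} {p : ℤ × ℤ} (he : e ∈ tileEdges p) :
    e.1.1 + e.1.2 = p.1 + p.2 ∨ e.1.1 + e.1.2 = p.1 + p.2 + 1 := by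
  rcases mem_tileEdges.1 he with rfl | rfl | rfl | rfl <;> simp <;> omega

lemma tile_inter_succ {p : ℤ × ℤ} {c : Bool} {e : Edge}
    (h1 : e ∈ tileEdges p) (h2 : e ∈ tileEdges (p + step c)) :
    e = if c then topEdge p else rightEdge p := by
  cases c <;>
    rcases mem_tileEdges.1 h1 with rfl | rfl | rfl | rfl <;>
      simp_all [step, mem_tileEdges, topEdge, rightEdge, Prod.ext_iff] <;> omega

lemma tile_inter (f : ℕ → Bool) {j k : ℕ} (hj : 1 ≤ j) (hjk : j < k) {e : Edge}
    (h1 : e ∈ tileEdges (pos f j)) (h2 : e ∈ tileEdges (pos f k)) :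
    k = j + 1 ∧ e = (if f j then topEdge (pos f j) else rightEdge (pos f j)) := by
  have hk : 1 ≤ k := by omega
  have hsj := pos_sum f j hj
  have hsk := pos_sum f k hk
  have s1 := mem_tileEdges_sum h1
  have s2 := mem_tileEdges_sum h2
  have hkj : k = j + 1 := by omega
  subst hkj
  rw [pos_succ f hj] at h2
  exact ⟨rfl, tile_inter_succ h1 h2⟩

lemma mem_tileCorners_sum {v p : ℤ × ℤ} (hv : v ∈ tileCorners p) :
    p.1 + p.2 ≤ v.1 + v.2 ∧ v.1 + v.2 ≤ p.1 + p.2 + 2 := by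
  rcases mem_tileCorners.1 hv with rfl | rfl | rfl | rfl <;> simp <;> omega

lemma corner_max {v p : ℤ × ℤ} (hv : v ∈ tileCorners p) (h : v.1 + v.2 = p.1 + p.2 + 2) :
    v = p + (1, 1) := by
  rcases mem_tileCorners.1 hv with rfl | rfl | rfl | rfl <;> simp_all <;> omega

lemma mem_snakeEdges {d : ℕ} {f : ℕ → Bool} {e : Edge} :
    e ∈ snakeEdges d f ↔ ∃ j, 1 ≤ j ∧ j ≤ d ∧ e ∈ tileEdges (pos f j) := by
  simp [snakeEdges, Finset.mem_biUnion, Finset.mem_Icc, and_assoc]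

lemma mem_snakeVertices {d : ℕ} {f : ℕ → Bool} {v : ℤ × ℤ} :
    v ∈ snakeVertices d f ↔ ∃ j, 1 ≤ j ∧ j ≤ d ∧ v ∈ tileCorners (pos f j) := by
  simp [snakeVertices, Finset.mem_biUnion, Finset.mem_Icc, and_assoc]

lemma snakeEdges_sum {d : ℕ} {f : ℕ → Bool} {e : Edge} (he : e ∈ snakeEdges d f) :
    0 ≤ e.1.1 + e.1.2 ∧ e.1.1 + e.1.2 ≤ (d : ℤ) := by
  obtain ⟨j, hj1, hjd, he⟩ := mem_snakeEdges.1 he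
  have := pos_sum f j hj1
  have := mem_tileEdges_sum he
  omega

lemma endpoint_mem_snakeVertices {d : ℕ} {f : ℕ → Bool} {e : Edge} {v : ℤ × ℤ}
    (he : e ∈ snakeEdges d f) (hv : v ∈ endpoints e) : v ∈ snakeVertices d f := by
  obtain ⟨j, hj1, hjd, he⟩ := mem_snakeEdges.1 he
  exact mem_snakeVertices.2 ⟨j, hj1, hjd, endpoints_subset he v hv⟩

lemma not_mem_snakeVertices_hi {d : ℕ} {f : ℕ → Bool} {v : ℤ × ℤ}
    (h : (d : ℤ) + 2 ≤ v.1 + v.2) : v ∉ snakeVertices d f := by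
  intro hv
  obtain ⟨j, hj1, hjd, hv⟩ := mem_snakeVertices.1 hv
  have := pos_sum f j hj1
  have := mem_tileCorners_sum hv
  omega

lemma not_mem_snakeVertices_mid {d : ℕ} {f : ℕ → Bool} {v : ℤ × ℤ}
    (h : v.1 + v.2 = (d : ℤ) + 1) (hne : v ≠ pos f d + (1, 1)) : v ∉ snakeVertices d f := by
  intro hv
  obtain ⟨j, hj1, hjd, hvc⟩ := mem_snakeVertices.1 hv
  have hs := pos_sum f j hj1
  have hc := mem_tileCorners_sum hvc
  have hjd' : j = d := by omega
  subst hjd'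
  exact hne (corner_max hvc (by omega))

lemma Icc_one_succ (d : ℕ) : Finset.Icc 1 (d + 1) = insert (d + 1) (Finset.Icc 1 d) := by
  ext k; simp [Finset.mem_Icc]; omega

lemma snakeEdges_succ (d : ℕ) (f : ℕ → Bool) :
    snakeEdges (d + 1) f = tileEdges (pos f (d + 1)) ∪ snakeEdges d f := by
  unfold snakeEdges; rw [Icc_one_succ, Finset.biUnion_insert]

lemma snakeVertices_succ (d : ℕ) (f : ℕ → Bool) :
    snakeVertices (d + 1) f = tileCorners (pos f (d + 1)) ∪ snakeVertices d f := by
  unfold snakeVertices; rw [Icc_one_succ, Finset.biUnion_insert]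

lemma isBoundary_succ_iff {d : ℕ} {f : ℕ → Bool} {e : Edge}
    (hne : e ∉ tileEdges (pos f (d + 1))) :
    IsBoundaryEdge (d + 1) f e ↔ IsBoundaryEdge d f e := by
  unfold IsBoundaryEdge
  rw [Icc_one_succ, Finset.filter_insert, if_neg hne]

lemma isBoundary_of_unique {d : ℕ} {f : ℕ → Bool} {e : Edge} {j : ℕ}
    (hj1 : 1 ≤ j) (hjd : j ≤ d) (he : e ∈ tileEdges (pos f j))
    (hu : ∀ k, 1 ≤ k → k ≤ d → e ∈ tileEdges (pos f k) → k = j) :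
    IsBoundaryEdge d f e := by
  unfold IsBoundaryEdge
  have : (Finset.Icc 1 d).filter (fun k => e ∈ tileEdges (pos f k)) = {j} := by
    ext k
    simp only [Finset.mem_filter, Finset.mem_Icc, Finset.mem_singleton]
    constructor
    · rintro ⟨⟨h1, h2⟩, h3⟩; exact hu k h1 h2 h3
    · rintro rfl; exact ⟨⟨hj1, hjd⟩, he⟩
  rw [this, Finset.card_singleton]

lemma boundary_tile {d : ℕ} {f : ℕ → Bool} {e : Edge} (h : IsBoundaryEdge d f e) :
    ∃ j, 1 ≤ j ∧ j ≤ d ∧ e ∈ tileEdges (pos f j) := by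
  unfold IsBoundaryEdge at h
  obtain ⟨j, hj⟩ := Finset.card_eq_one.mp h
  have : j ∈ (Finset.Icc 1 d).filter (fun k => e ∈ tileEdges (pos f k)) := by
    rw [hj]; exact Finset.mem_singleton_self j
  simp only [Finset.mem_filter, Finset.mem_Icc] at this
  exact ⟨j, this.1.1, this.1.2, this.2⟩

lemma boundary_mem_snakeEdges {d : ℕ} {f : ℕ → Bool} {e : Edge} (h : IsBoundaryEdge d f e) :
    e ∈ snakeEdges d f := by
  obtain ⟨j, h1, h2, h3⟩ := boundary_tile h
  exact mem_snakeEdges.2 ⟨j, h1, h2, h3⟩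

def sharedE (f : ℕ → Bool) (j : ℕ) : Edge :=
  if f j then topEdge (pos f j) else rightEdge (pos f j)

lemma sharedE_mem_left (f : ℕ → Bool) (j : ℕ) : sharedE f j ∈ tileEdges (pos f j) := by
  cases h : f j <;> simp [sharedE, h, mem_tileEdges, topEdge, rightEdge]

lemma sharedE_mem_right (f : ℕ → Bool) {j : ℕ} (hj : 1 ≤ j) :
    sharedE f j ∈ tileEdges (pos f (j + 1)) := by
  rw [pos_succ f hj]
  cases h : f j <;>
    simp [sharedE, h, step, mem_tileEdges, topEdge, rightEdge, Prod.ext_iff]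

lemma sharedE_not_boundary {d : ℕ} {f : ℕ → Bool} {j : ℕ} (hj : 1 ≤ j) (hjd : j + 1 ≤ d) :
    ¬ IsBoundaryEdge d f (sharedE f j) := by
  intro h
  unfold IsBoundaryEdge at h
  have hsub : ({j, j + 1} : Finset ℕ) ⊆
      (Finset.Icc 1 d).filter (fun k => sharedE f j ∈ tileEdges (pos f k)) := by
    intro k hk
    simp only [Finset.mem_insert, Finset.mem_singleton] at hk
    rcases hk with rfl | rfl <;>
      simp only [Finset.mem_filter, Finset.mem_Icc]
    · exact ⟨⟨hj, by omega⟩, sharedE_mem_left f k⟩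
    · exact ⟨⟨by omega, hjd⟩, sharedE_mem_right f hj⟩
  have := Finset.card_le_card hsub
  rw [h, Finset.card_insert_of_notMem (by simp), Finset.card_singleton] at this
  omega

lemma eq_singleton_of_card {α : Type*} {s : Finset α} {a : α}
    (h : s.card = 1) (ha : a ∈ s) : s = {a} := by
  obtain ⟨b, rfl⟩ := Finset.card_eq_one.mp h
  simp only [Finset.mem_singleton] at ha
  subst ha; rfl

lemma cover_in_new_tile {d : ℕ} {f : ℕ → Bool} {e : Edge} {v : ℤ × ℤ}
    (he : e ∈ snakeEdges (d + 1) f) (hv : v ∈ endpoints e)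
    (hnv : v ∉ snakeVertices d f) : e ∈ tileEdges (pos f (d + 1)) := by
  obtain ⟨j, hj1, hjd, hej⟩ := mem_snakeEdges.1 he
  rcases Nat.lt_or_ge j (d + 1) with h | h
  · exact absurd (mem_snakeVertices.2 ⟨j, hj1, by omega, endpoints_subset hej v hv⟩) hnv
  · have : j = d + 1 := by omega
    subst this; exact hej

end SnakeAux

namespace SnakeAux

lemma not_mem_snakeEdges_sum {d : ℕ} {f : ℕ → Bool} {e : Edge}
    (h : (d : ℤ) < e.1.1 + e.1.2) : e ∉ snakeEdges d f :=
  fun he => absurd (snakeEdges_sum he).2 (by omega)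

lemma new_tile_only {d : ℕ} {f : ℕ → Bool} {e : Edge} (hd : 1 ≤ d)
    (he : e ∈ tileEdges (pos f (d + 1))) (hne : e ≠ sharedE f d) :
    e ∉ snakeEdges d f := by
  intro h
  obtain ⟨j, hj1, hjd, hej⟩ := mem_snakeEdges.1 h
  obtain ⟨h1, h2⟩ := tile_inter f hj1 (show j < d + 1 by omega) hej he
  have : j = d := by omega
  subst this
  exact hne h2

lemma new_tile_boundary {d : ℕ} {f : ℕ → Bool} {e : Edge} (hd : 1 ≤ d)
    (he : e ∈ tileEdges (pos f (d + 1))) (hne : e ≠ sharedE f d) :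
    IsBoundaryEdge (d + 1) f e := by
  refine isBoundary_of_unique (by omega) le_rfl he ?_
  intro k hk1 hkd hek
  by_contra hne'
  have hk : k < d + 1 := by omega
  obtain ⟨h1, h2⟩ := tile_inter f hk1 hk hek he
  have : k = d := by omega
  subst this
  exact hne h2

lemma old_boundary_succ {d : ℕ} {f : ℕ → Bool} {e : Edge}
    (hb : IsBoundaryEdge d f e) (hne : e ≠ sharedE f d) :
    IsBoundaryEdge (d + 1) f e := by
  obtain ⟨j, hj1, hjd, hej⟩ := boundary_tile hb
  rw [isBoundary_succ_iff ?_]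
  · exact hb
  · intro he'
    obtain ⟨h1, h2⟩ := tile_inter f hj1 (show j < d + 1 by omega) hej he'
    have : j = d := by omega
    subst this
    exact hne h2

lemma boundary_of_last {n : ℕ} {f : ℕ → Bool} {e : Edge} (hn : 1 ≤ n)
    (he : e ∈ tileEdges (pos f n)) (hsum : e.1.1 + e.1.2 = (n : ℤ)) :
    IsBoundaryEdge n f e := by
  refine isBoundary_of_unique hn le_rfl he ?_
  intro k hk1 hkd hek
  have := mem_tileEdges_sum hek
  have := pos_sum f k hk1
  omega

lemma snakeEdges_one (f : ℕ → Bool) : snakeEdges 1 f = tileEdges (0, 0) := by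
  unfold snakeEdges
  rw [show Finset.Icc 1 1 = {1} by rfl, Finset.singleton_biUnion, pos_one]

lemma snakeVertices_one (f : ℕ → Bool) : snakeVertices 1 f = tileCorners (0, 0) := by
  unfold snakeVertices
  rw [show Finset.Icc 1 1 = {1} by rfl, Finset.singleton_biUnion, pos_one]

lemma boundary_one {f : ℕ → Bool} {e : Edge} (he : e ∈ tileEdges (0, 0)) :
    IsBoundaryEdge 1 f e := by
  unfold IsBoundaryEdge
  rw [show Finset.Icc 1 1 = {1} by rfl, Finset.filter_singleton, if_pos (by rw [pos_one]; exact he)]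
  rfl

lemma snakeVertices_mono (d : ℕ) (f : ℕ → Bool) :
    snakeVertices d f ⊆ snakeVertices (d + 1) f := by
  rw [snakeVertices_succ]; exact Finset.subset_union_right

lemma cov_empty {d : ℕ} {f : ℕ → Bool} {P : Finset Edge} {v : ℤ × ℤ}
    (hP : P ⊆ snakeEdges d f) (hv : v ∉ snakeVertices d f) :
    (P.filter fun e => v ∈ endpoints e) = ∅ := by
  rw [Finset.filter_eq_empty_iff]
  intro e he hve
  exact hv (endpoint_mem_snakeVertices (hP he) hve)

def st (b : Bool) (d : ℕ) : Bool := if d % 2 = 1 then b else !b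

lemma st_one (b : Bool) : st b 1 = b := rfl

lemma st_succ (b : Bool) (d : ℕ) : st b (d + 1) = !(st b d) := by
  rcases Nat.mod_two_eq_zero_or_one d with h | h <;>
    simp [st, Nat.add_mod, h]

def build (f : ℕ → Bool) (b : Bool) : ℕ → Finset Edge
  | 0 => ∅
  | 1 => if b then {bottomEdge (0, 0), topEdge (0, 0)} else {leftEdge (0, 0), rightEdge (0, 0)}
  | d + 2 =>
      if f (d + 1) then
        if st b (d + 1) then
          ((build f b (d + 1)).erase (topEdge (pos f (d + 1)))) ∪
            {leftEdge (pos f (d + 2)), rightEdge (pos f (d + 2))}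
        else insert (topEdge (pos f (d + 2))) (build f b (d + 1))
      else
        if st b (d + 1) then insert (rightEdge (pos f (d + 2))) (build f b (d + 1))
        else ((build f b (d + 1)).erase (rightEdge (pos f (d + 1)))) ∪
            {bottomEdge (pos f (d + 2)), topEdge (pos f (d + 2))}

lemma build_one (f : ℕ → Bool) (b : Bool) :
    build f b 1 = if b then {bottomEdge (0, 0), topEdge (0, 0)}
      else {leftEdge (0, 0), rightEdge (0, 0)} := rfl

lemma build_succ (f : ℕ → Bool) (b : Bool) {d : ℕ} (hd : 1 ≤ d) :
    build f b (d + 1) =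
      if f d then
        if st b d then
          ((build f b d).erase (topEdge (pos f d))) ∪
            {leftEdge (pos f (d + 1)), rightEdge (pos f (d + 1))}
        else insert (topEdge (pos f (d + 1))) (build f b d)
      else
        if st b d then insert (rightEdge (pos f (d + 1))) (build f b d)
        else ((build f b d).erase (rightEdge (pos f d))) ∪
            {bottomEdge (pos f (d + 1)), topEdge (pos f (d + 1))} := by
  cases d with
  | zero => omega
  | succ k => rfl

end SnakeAux

namespace SnakeAux

lemma build_spec_one (f : ℕ → Bool) (b : Bool) :
    (∀ e ∈ build f b 1, IsBoundaryEdge 1 f e) ∧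
    (∀ v ∈ snakeVertices 1 f, ((build f b 1).filter fun e => v ∈ endpoints e).card = 1) ∧
    (topEdge (pos f 1) ∈ build f b 1 ↔ st b 1 = true) ∧
    (rightEdge (pos f 1) ∈ build f b 1 ↔ st b 1 = false) ∧
    (bottomEdge (0, 0) ∈ build f b 1 ↔ b = true) ∧
    (leftEdge (0, 0) ∈ build f b 1 ↔ b = false) := by
  rw [build_one, pos_one, st_one]
  cases b <;>
    refine ⟨?_, ?_, ?_, ?_, ?_, ?_⟩ <;>
    simp only [if_true, if_false, Bool.false_eq_true, Bool.true_eq_false] <;>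
    try (intro x hx)
  case false.refine_1 =>
    apply boundary_one
    simp only [Finset.mem_insert, Finset.mem_singleton] at hx
    rcases hx with rfl | rfl <;> simp [mem_tileEdges, leftEdge, rightEdge]
  case false.refine_2 =>
    rw [snakeVertices_one] at hx
    rcases mem_tileCorners.1 hx with rfl | rfl | rfl | rfl <;>
      simp only [leftEdge, rightEdge, bottomEdge, topEdge] <;> decide
  case true.refine_1 =>
    apply boundary_one
    simp only [Finset.mem_insert, Finset.mem_singleton] at hx
    rcases hx with rfl | rfl <;> simp [mem_tileEdges, bottomEdge, topEdge]
  case true.refine_2 =>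
    rw [snakeVertices_one] at hx
    rcases mem_tileCorners.1 hx with rfl | rfl | rfl | rfl <;>
      simp only [leftEdge, rightEdge, bottomEdge, topEdge] <;> decide
  all_goals simp only [leftEdge, rightEdge, bottomEdge, topEdge] <;> decide

end SnakeAux
namespace SnakeAux

lemma endpoints_bottom (q : ℤ × ℤ) : endpoints (bottomEdge q) = {q, q + (1, 0)} := rfl

lemma endpoints_left (q : ℤ × ℤ) : endpoints (leftEdge q) = {q, q + (0, 1)} := rfl

lemma endpoints_top (q : ℤ × ℤ) : endpoints (topEdge q) = {q + (0, 1), q + (1, 1)} := by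
  have : q + (0, 1) + ((1 : ℤ), (0 : ℤ)) = q + (1, 1) := by
    rw [Prod.ext_iff]; simp
  simp [endpoints, topEdge, this]

lemma endpoints_right (q : ℤ × ℤ) : endpoints (rightEdge q) = {q + (1, 0), q + (1, 1)} := by
  have : q + (1, 0) + ((0 : ℤ), (1 : ℤ)) = q + (1, 1) := by
    rw [Prod.ext_iff]; simp
  simp [endpoints, rightEdge, this]

lemma ne_of_sum {e1 e2 : Edge} (h : e1.1.1 + e1.1.2 ≠ e2.1.1 + e2.1.2) : e1 ≠ e2 :=
  fun h' => h (by rw [h'])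

lemma build_spec (f : ℕ → Bool) (b : Bool) : ∀ d, 1 ≤ d →
    (∀ e ∈ build f b d, IsBoundaryEdge d f e) ∧
    (∀ v ∈ snakeVertices d f, ((build f b d).filter fun e => v ∈ endpoints e).card = 1) ∧
    (topEdge (pos f d) ∈ build f b d ↔ st b d = true) ∧
    (rightEdge (pos f d) ∈ build f b d ↔ st b d = false) ∧
    (bottomEdge (0, 0) ∈ build f b d ↔ b = true) ∧
    (leftEdge (0, 0) ∈ build f b d ↔ b = false) := by
  refine Nat.le_induction (build_spec_one f b) ?_
  intro n hn ih
  obtain ⟨ih1, ih2, ih3, ih4, ih5, ih6⟩ := ih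
  have hPsub : build f b n ⊆ snakeEdges n f := fun e he => boundary_mem_snakeEdges (ih1 e he)
  have hsp := pos_sum f n hn
  have hsp' := pos_sum f (n + 1) (by omega)
  have htop'P : topEdge (pos f (n + 1)) ∉ build f b n := by
    intro h
    refine not_mem_snakeEdges_sum ?_ (hPsub h)
    simp only [topEdge, Prod.fst_add, Prod.snd_add]; omega
  have hright'P : rightEdge (pos f (n + 1)) ∉ build f b n := by
    intro h
    refine not_mem_snakeEdges_sum ?_ (hPsub h)
    simp only [rightEdge, Prod.fst_add, Prod.snd_add]; omega
  rw [build_succ f b hn]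
  cases hf : f n with
  | true =>
    have hp' : pos f (n + 1) = pos f n + (0, 1) := by rw [pos_succ f hn, hf]; rfl
    have hshared_eq : sharedE f n = topEdge (pos f n) := by simp [sharedE, hf]
    have hbot' : bottomEdge (pos f (n + 1)) = topEdge (pos f n) := by rw [hp']; rfl
    have hv1n : pos f (n + 1) + (0, 1) ∉ snakeVertices n f := by
      apply not_mem_snakeVertices_mid
      · simp only [Prod.fst_add, Prod.snd_add]; omega
      · rw [hp']; simp only [Prod.ext_iff, Prod.fst_add, Prod.snd_add, ne_eq, not_and]
        intro h; omega
    have hv2n : pos f (n + 1) + (1, 1) ∉ snakeVertices n f := by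
      apply not_mem_snakeVertices_hi
      simp only [Prod.fst_add, Prod.snd_add]; omega
    have hpv : pos f (n + 1) ∈ snakeVertices n f := by
      refine mem_snakeVertices.2 ⟨n, hn, le_rfl, mem_tileCorners.2 ?_⟩
      rw [hp']; exact Or.inr (Or.inr (Or.inl rfl))
    have hqv : pos f (n + 1) + (1, 0) ∈ snakeVertices n f := by
      refine mem_snakeVertices.2 ⟨n, hn, le_rfl, mem_tileCorners.2 ?_⟩
      rw [hp']
      have : pos f n + (0, 1) + ((1 : ℤ), (0 : ℤ)) = pos f n + (1, 1) := by
        rw [Prod.ext_iff]; simp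
      rw [this]; exact Or.inr (Or.inr (Or.inr rfl))
    -- endpoint membership facts for the four tile-(n+1) edges
    have he_l1 : pos f (n + 1) ∈ endpoints (leftEdge (pos f (n + 1))) := by
      rw [endpoints_left]; simp
    have he_l2 : pos f (n + 1) + (0, 1) ∈ endpoints (leftEdge (pos f (n + 1))) := by
      rw [endpoints_left]; simp
    have he_l3 : ∀ v : ℤ × ℤ, v ≠ pos f (n + 1) → v ≠ pos f (n + 1) + (0, 1) →
        v ∉ endpoints (leftEdge (pos f (n + 1))) := by
      intro v h1 h2
      rw [endpoints_left]
      simp only [Finset.mem_insert, Finset.mem_singleton]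
      rintro (rfl | rfl); exacts [h1 rfl, h2 rfl]
    have he_r1 : pos f (n + 1) + (1, 0) ∈ endpoints (rightEdge (pos f (n + 1))) := by
      rw [endpoints_right]; simp
    have he_r2 : pos f (n + 1) + (1, 1) ∈ endpoints (rightEdge (pos f (n + 1))) := by
      rw [endpoints_right]; simp
    have he_r3 : ∀ v : ℤ × ℤ, v ≠ pos f (n + 1) + (1, 0) → v ≠ pos f (n + 1) + (1, 1) →
        v ∉ endpoints (rightEdge (pos f (n + 1))) := by
      intro v h1 h2
      rw [endpoints_right]
      simp only [Finset.mem_insert, Finset.mem_singleton]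
      rintro (rfl | rfl); exacts [h1 rfl, h2 rfl]
    have he_t1 : pos f (n + 1) ∈ endpoints (topEdge (pos f n)) := by
      rw [← hbot', endpoints_bottom]; simp
    have he_t2 : pos f (n + 1) + (1, 0) ∈ endpoints (topEdge (pos f n)) := by
      rw [← hbot', endpoints_bottom]; simp
    have he_t3 : ∀ v : ℤ × ℤ, v ≠ pos f (n + 1) → v ≠ pos f (n + 1) + (1, 0) →
        v ∉ endpoints (topEdge (pos f n)) := by
      intro v h1 h2
      rw [← hbot', endpoints_bottom]
      simp only [Finset.mem_insert, Finset.mem_singleton]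
      rintro (rfl | rfl); exacts [h1 rfl, h2 rfl]
    have he_t1' : pos f (n + 1) + (0, 1) ∈ endpoints (topEdge (pos f (n + 1))) := by
      rw [endpoints_top]; simp
    have he_t2' : pos f (n + 1) + (1, 1) ∈ endpoints (topEdge (pos f (n + 1))) := by
      rw [endpoints_top]; simp
    have he_t3' : ∀ v : ℤ × ℤ, v ≠ pos f (n + 1) + (0, 1) → v ≠ pos f (n + 1) + (1, 1) →
        v ∉ endpoints (topEdge (pos f (n + 1))) := by
      intro v h1 h2
      rw [endpoints_top]
      simp only [Finset.mem_insert, Finset.mem_singleton]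
      rintro (rfl | rfl); exacts [h1 rfl, h2 rfl]
    -- coordinate distinctness facts
    have hd1 : pos f (n + 1) ≠ pos f (n + 1) + (0, 1) := by
      simp only [ne_eq, Prod.ext_iff, Prod.fst_add, Prod.snd_add, not_and]; intro h; omega
    have hd2 : pos f (n + 1) ≠ pos f (n + 1) + (1, 0) := by
      simp only [ne_eq, Prod.ext_iff, Prod.fst_add, Prod.snd_add, not_and]; intro h; omega
    have hd3 : pos f (n + 1) ≠ pos f (n + 1) + (1, 1) := by
      simp only [ne_eq, Prod.ext_iff, Prod.fst_add, Prod.snd_add, not_and]; intro h; omega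
    have hd4 : pos f (n + 1) + (1, 0) ≠ pos f (n + 1) + (0, 1) := by
      simp only [ne_eq, Prod.ext_iff, Prod.fst_add, Prod.snd_add, not_and]; intro h; omega
    have hd5 : pos f (n + 1) + (1, 0) ≠ pos f (n + 1) + (1, 1) := by
      simp only [ne_eq, Prod.ext_iff, Prod.fst_add, Prod.snd_add, not_and]; intro h; omega
    have hd6 : pos f (n + 1) + (0, 1) ≠ pos f (n + 1) + (1, 1) := by
      simp only [ne_eq, Prod.ext_iff, Prod.fst_add, Prod.snd_add, not_and]; intro h; omega
    have hd7 : pos f (n + 1) + (0, 1) ≠ pos f (n + 1) + (1, 0) := fun h => hd4 h.symm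
    rw [if_pos rfl]
    cases hst : st b n with
    | true =>
      have htopP : topEdge (pos f n) ∈ build f b n := ih3.mpr hst
      rw [if_pos rfl]
      have hleft'P : leftEdge (pos f (n + 1)) ∉ build f b n := by
        intro h
        refine new_tile_only hn ?_ ?_ (hPsub h)
        · simp [mem_tileEdges, leftEdge]
        · rw [hshared_eq]; simp [leftEdge, topEdge]
      refine ⟨?_, ?_, ?_, ?_, ?_, ?_⟩
      · -- boundary
        intro e he
        rcases Finset.mem_union.1 he with he | he
        · exact old_boundary_succ (ih1 e (Finset.mem_of_mem_erase he))
            (by rw [hshared_eq]; exact Finset.ne_of_mem_erase he)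
        · simp only [Finset.mem_insert, Finset.mem_singleton] at he
          rcases he with rfl | rfl
          · exact new_tile_boundary hn (by simp [mem_tileEdges, leftEdge])
              (by rw [hshared_eq]; simp [leftEdge, topEdge])
          · exact new_tile_boundary hn (by simp [mem_tileEdges, rightEdge])
              (by rw [hshared_eq]; simp [rightEdge, topEdge])
      · -- covering
        intro v hv
        rw [snakeVertices_succ] at hv
        rw [Finset.filter_union, Finset.filter_erase]
        by_cases hvold : v ∈ snakeVertices n f
        · by_cases hv1 : v = pos f (n + 1)
          · subst hv1
            have hold : (build f b n).filter
                (fun e => pos f (n + 1) ∈ endpoints e) = {topEdge (pos f n)} :=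
              eq_singleton_of_card (ih2 _ hvold) (Finset.mem_filter.2 ⟨htopP, he_t1⟩)
            have hno : pos f (n + 1) ∉ endpoints (rightEdge (pos f (n + 1))) :=
              he_r3 _ hd2 hd3
            rw [hold, Finset.erase_singleton, Finset.empty_union, Finset.filter_insert,
              if_pos he_l1, Finset.filter_singleton, if_neg hno]
            simp
          · by_cases hv2 : v = pos f (n + 1) + (1, 0)
            · subst hv2
              have hold : (build f b n).filter
                  (fun e => pos f (n + 1) + (1, 0) ∈ endpoints e) = {topEdge (pos f n)} :=
                eq_singleton_of_card (ih2 _ hvold) (Finset.mem_filter.2 ⟨htopP, he_t2⟩)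
              have hno : pos f (n + 1) + (1, 0) ∉ endpoints (leftEdge (pos f (n + 1))) :=
                he_l3 _ (fun h => hd2 h.symm) hd4
              rw [hold, Finset.erase_singleton, Finset.empty_union, Finset.filter_insert,
                if_neg hno, Finset.filter_singleton, if_pos he_r1]
              simp
            · have hne1 : v ≠ pos f (n + 1) + (0, 1) := fun h => hv1n (h ▸ hvold)
              have hne2 : v ≠ pos f (n + 1) + (1, 1) := fun h => hv2n (h ▸ hvold)
              have h1 := he_t3 v hv1 hv2
              have h2 := he_l3 v hv1 hne1
              have h3 := he_r3 v hv2 hne2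
              have hpair : ({leftEdge (pos f (n + 1)), rightEdge (pos f (n + 1))} :
                  Finset Edge).filter (fun e => v ∈ endpoints e) = ∅ := by
                rw [Finset.filter_insert, if_neg h2, Finset.filter_singleton, if_neg h3]
              have hnot : topEdge (pos f n) ∉
                  (build f b n).filter (fun e => v ∈ endpoints e) :=
                fun h => h1 (Finset.mem_filter.1 h).2
              rw [hpair, Finset.union_empty, Finset.erase_eq_of_notMem hnot]
              exact ih2 v hvold
        · have hPf : (build f b n).filter (fun e => v ∈ endpoints e) = ∅ :=
            cov_empty hPsub hvold
          rw [hPf]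
          rcases Finset.mem_union.1 hv with hv | hv
          swap
          · exact absurd hv hvold
          rcases mem_tileCorners.1 hv with rfl | rfl | rfl | rfl
          · exact absurd hpv hvold
          · exact absurd hqv hvold
          · have hno : pos f (n + 1) + (0, 1) ∉ endpoints (rightEdge (pos f (n + 1))) :=
              he_r3 _ hd7 hd6
            rw [Finset.erase_empty, Finset.empty_union, Finset.filter_insert,
              if_pos he_l2, Finset.filter_singleton, if_neg hno]
            simp
          · have hno : pos f (n + 1) + (1, 1) ∉ endpoints (leftEdge (pos f (n + 1))) :=
              he_l3 _ (fun h => hd3 h.symm) (fun h => hd6 h.symm)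
            rw [Finset.erase_empty, Finset.empty_union, Finset.filter_insert,
              if_neg hno, Finset.filter_singleton, if_pos he_r2]
            simp
      · -- top edge of tile n+1
        rw [st_succ, hst]
        simp only [Bool.not_true, Bool.false_eq_true, iff_false]
        intro h
        rcases Finset.mem_union.1 h with h | h
        · exact htop'P (Finset.mem_of_mem_erase h)
        · simp only [Finset.mem_insert, Finset.mem_singleton] at h
          rcases h with h | h
          · exact absurd h (by simp [topEdge, leftEdge])
          · refine absurd h ?_
            simp only [topEdge, rightEdge, Prod.mk.injEq, Prod.ext_iff, Prod.fst_add,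
              Prod.snd_add, not_and]
            intro h'; omega
      · -- right edge of tile n+1
        rw [st_succ, hst]
        simp only [Bool.not_true, iff_true]
        exact Finset.mem_union_right _ (by simp)
      · -- bottom edge of tile 1
        rw [← ih5]
        constructor
        · intro h
          rcases Finset.mem_union.1 h with h | h
          · exact Finset.mem_of_mem_erase h
          · simp only [Finset.mem_insert, Finset.mem_singleton] at h
            rcases h with h | h
            · exact absurd h (by simp [bottomEdge, leftEdge])
            · exact absurd h (by simp [bottomEdge, rightEdge])
        · intro h
          refine Finset.mem_union_left _ (Finset.mem_erase.2 ⟨?_, h⟩)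
          apply ne_of_sum
          simp [bottomEdge, topEdge]
          omega
      · -- left edge of tile 1
        rw [← ih6]
        constructor
        · intro h
          rcases Finset.mem_union.1 h with h | h
          · exact Finset.mem_of_mem_erase h
          · simp only [Finset.mem_insert, Finset.mem_singleton] at h
            rcases h with h | h
            · refine absurd h ?_
              apply ne_of_sum
              simp [leftEdge]
              omega
            · refine absurd h ?_
              apply ne_of_sum
              simp [leftEdge, rightEdge]
              omega
        · intro h
          exact Finset.mem_union_left _ (Finset.mem_erase.2 ⟨by simp [leftEdge, topEdge], h⟩)
    | false =>
      have htopP : topEdge (pos f n) ∉ build f b n := by rw [ih3, hst]; simp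
      rw [if_neg (by simp)]
      refine ⟨?_, ?_, ?_, ?_, ?_, ?_⟩
      · -- boundary
        intro e he
        rcases Finset.mem_insert.1 he with rfl | he
        · refine new_tile_boundary hn (by simp [mem_tileEdges, topEdge]) ?_
          rw [hshared_eq]
          simp only [topEdge, Prod.mk.injEq, Prod.ext_iff, Prod.fst_add, Prod.snd_add,
            ne_eq, not_and]
          intro h'; omega
        · exact old_boundary_succ (ih1 e he)
            (by rw [hshared_eq]; exact fun h => htopP (h ▸ he))
      · -- covering
        intro v hv
        rw [snakeVertices_succ] at hv
        rw [Finset.filter_insert]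
        by_cases hvold : v ∈ snakeVertices n f
        · have hne1 : v ≠ pos f (n + 1) + (0, 1) := fun h => hv1n (h ▸ hvold)
          have hne2 : v ≠ pos f (n + 1) + (1, 1) := fun h => hv2n (h ▸ hvold)
          rw [if_neg (he_t3' v hne1 hne2)]
          exact ih2 v hvold
        · have hPf : (build f b n).filter (fun e => v ∈ endpoints e) = ∅ :=
            cov_empty hPsub hvold
          rcases Finset.mem_union.1 hv with hv | hv
          swap
          · exact absurd hv hvold
          rcases mem_tileCorners.1 hv with rfl | rfl | rfl | rfl
          · exact absurd hpv hvold
          · exact absurd hqv hvold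
          · rw [if_pos he_t1', hPf]; simp
          · rw [if_pos he_t2', hPf]; simp
      · rw [st_succ, hst]
        simp only [Bool.not_false, iff_true]
        exact Finset.mem_insert_self _ _
      · rw [st_succ, hst]
        simp only [Bool.not_false, Bool.true_eq_false, iff_false]
        intro h
        rcases Finset.mem_insert.1 h with h | h
        · exact absurd h (by simp [rightEdge, topEdge])
        · exact hright'P h
      · rw [← ih5]
        constructor
        · intro h
          rcases Finset.mem_insert.1 h with h | h
          · refine absurd h ?_
            apply ne_of_sum
            simp [bottomEdge, topEdge]
            omega
          · exact h
        · exact fun h => Finset.mem_insert_of_mem h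
      · rw [← ih6]
        constructor
        · intro h
          rcases Finset.mem_insert.1 h with h | h
          · exact absurd h (by simp [leftEdge, topEdge])
          · exact h
        · exact fun h => Finset.mem_insert_of_mem h
  | false =>
    have hp' : pos f (n + 1) = pos f n + (1, 0) := by rw [pos_succ f hn, hf]; rfl
    have hshared_eq : sharedE f n = rightEdge (pos f n) := by simp [sharedE, hf]
    have hleft' : leftEdge (pos f (n + 1)) = rightEdge (pos f n) := by rw [hp']; rfl
    have hv1n : pos f (n + 1) + (1, 0) ∉ snakeVertices n f := by
      apply not_mem_snakeVertices_mid
      · simp only [Prod.fst_add, Prod.snd_add]; omega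
      · rw [hp']; simp only [ne_eq, Prod.ext_iff, Prod.fst_add, Prod.snd_add, not_and]
        intro h; omega
    have hv2n : pos f (n + 1) + (1, 1) ∉ snakeVertices n f := by
      apply not_mem_snakeVertices_hi
      simp only [Prod.fst_add, Prod.snd_add]; omega
    have hpv : pos f (n + 1) ∈ snakeVertices n f := by
      refine mem_snakeVertices.2 ⟨n, hn, le_rfl, mem_tileCorners.2 ?_⟩
      rw [hp']; exact Or.inr (Or.inl rfl)
    have hqv : pos f (n + 1) + (0, 1) ∈ snakeVertices n f := by
      refine mem_snakeVertices.2 ⟨n, hn, le_rfl, mem_tileCorners.2 ?_⟩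
      rw [hp']
      have : pos f n + (1, 0) + ((0 : ℤ), (1 : ℤ)) = pos f n + (1, 1) := by
        rw [Prod.ext_iff]; simp
      rw [this]; exact Or.inr (Or.inr (Or.inr rfl))
    have he_b1 : pos f (n + 1) ∈ endpoints (bottomEdge (pos f (n + 1))) := by
      rw [endpoints_bottom]; simp
    have he_b2 : pos f (n + 1) + (1, 0) ∈ endpoints (bottomEdge (pos f (n + 1))) := by
      rw [endpoints_bottom]; simp
    have he_b3 : ∀ v : ℤ × ℤ, v ≠ pos f (n + 1) → v ≠ pos f (n + 1) + (1, 0) →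
        v ∉ endpoints (bottomEdge (pos f (n + 1))) := by
      intro v h1 h2
      rw [endpoints_bottom]
      simp only [Finset.mem_insert, Finset.mem_singleton]
      rintro (rfl | rfl); exacts [h1 rfl, h2 rfl]
    have he_r1 : pos f (n + 1) + (1, 0) ∈ endpoints (rightEdge (pos f (n + 1))) := by
      rw [endpoints_right]; simp
    have he_r2 : pos f (n + 1) + (1, 1) ∈ endpoints (rightEdge (pos f (n + 1))) := by
      rw [endpoints_right]; simp
    have he_r3 : ∀ v : ℤ × ℤ, v ≠ pos f (n + 1) + (1, 0) → v ≠ pos f (n + 1) + (1, 1) →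
        v ∉ endpoints (rightEdge (pos f (n + 1))) := by
      intro v h1 h2
      rw [endpoints_right]
      simp only [Finset.mem_insert, Finset.mem_singleton]
      rintro (rfl | rfl); exacts [h1 rfl, h2 rfl]
    have he_R1 : pos f (n + 1) ∈ endpoints (rightEdge (pos f n)) := by
      rw [← hleft', endpoints_left]; simp
    have he_R2 : pos f (n + 1) + (0, 1) ∈ endpoints (rightEdge (pos f n)) := by
      rw [← hleft', endpoints_left]; simp
    have he_R3 : ∀ v : ℤ × ℤ, v ≠ pos f (n + 1) → v ≠ pos f (n + 1) + (0, 1) →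
        v ∉ endpoints (rightEdge (pos f n)) := by
      intro v h1 h2
      rw [← hleft', endpoints_left]
      simp only [Finset.mem_insert, Finset.mem_singleton]
      rintro (rfl | rfl); exacts [h1 rfl, h2 rfl]
    have he_t1' : pos f (n + 1) + (0, 1) ∈ endpoints (topEdge (pos f (n + 1))) := by
      rw [endpoints_top]; simp
    have he_t2' : pos f (n + 1) + (1, 1) ∈ endpoints (topEdge (pos f (n + 1))) := by
      rw [endpoints_top]; simp
    have he_t3' : ∀ v : ℤ × ℤ, v ≠ pos f (n + 1) + (0, 1) → v ≠ pos f (n + 1) + (1, 1) →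
        v ∉ endpoints (topEdge (pos f (n + 1))) := by
      intro v h1 h2
      rw [endpoints_top]
      simp only [Finset.mem_insert, Finset.mem_singleton]
      rintro (rfl | rfl); exacts [h1 rfl, h2 rfl]
    have hd1 : pos f (n + 1) ≠ pos f (n + 1) + (0, 1) := by
      simp only [ne_eq, Prod.ext_iff, Prod.fst_add, Prod.snd_add, not_and]; intro h; omega
    have hd2 : pos f (n + 1) ≠ pos f (n + 1) + (1, 0) := by
      simp only [ne_eq, Prod.ext_iff, Prod.fst_add, Prod.snd_add, not_and]; intro h; omega
    have hd3 : pos f (n + 1) ≠ pos f (n + 1) + (1, 1) := by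
      simp only [ne_eq, Prod.ext_iff, Prod.fst_add, Prod.snd_add, not_and]; intro h; omega
    have hd4 : pos f (n + 1) + (1, 0) ≠ pos f (n + 1) + (0, 1) := by
      simp only [ne_eq, Prod.ext_iff, Prod.fst_add, Prod.snd_add, not_and]; intro h; omega
    have hd5 : pos f (n + 1) + (1, 0) ≠ pos f (n + 1) + (1, 1) := by
      simp only [ne_eq, Prod.ext_iff, Prod.fst_add, Prod.snd_add, not_and]; intro h; omega
    have hd6 : pos f (n + 1) + (0, 1) ≠ pos f (n + 1) + (1, 1) := by
      simp only [ne_eq, Prod.ext_iff, Prod.fst_add, Prod.snd_add, not_and]; intro h; omega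
    have hd7 : pos f (n + 1) + (0, 1) ≠ pos f (n + 1) + (1, 0) := fun h => hd4 h.symm
    rw [if_neg (by simp)]
    cases hst : st b n with
    | true =>
      have hrightP : rightEdge (pos f n) ∉ build f b n := by rw [ih4, hst]; simp
      rw [if_pos rfl]
      refine ⟨?_, ?_, ?_, ?_, ?_, ?_⟩
      · intro e he
        rcases Finset.mem_insert.1 he with rfl | he
        · refine new_tile_boundary hn (by simp [mem_tileEdges, rightEdge]) ?_
          rw [hshared_eq]
          apply ne_of_sum
          simp [rightEdge]
          omega
        · exact old_boundary_succ (ih1 e he)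
            (by rw [hshared_eq]; exact fun h => hrightP (h ▸ he))
      · intro v hv
        rw [snakeVertices_succ] at hv
        rw [Finset.filter_insert]
        by_cases hvold : v ∈ snakeVertices n f
        · have hne1 : v ≠ pos f (n + 1) + (1, 0) := fun h => hv1n (h ▸ hvold)
          have hne2 : v ≠ pos f (n + 1) + (1, 1) := fun h => hv2n (h ▸ hvold)
          rw [if_neg (he_r3 v hne1 hne2)]
          exact ih2 v hvold
        · have hPf : (build f b n).filter (fun e => v ∈ endpoints e) = ∅ :=
            cov_empty hPsub hvold
          rcases Finset.mem_union.1 hv with hv | hv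
          swap
          · exact absurd hv hvold
          rcases mem_tileCorners.1 hv with rfl | rfl | rfl | rfl
          · exact absurd hpv hvold
          · rw [if_pos he_r1, hPf]; simp
          · exact absurd hqv hvold
          · rw [if_pos he_r2, hPf]; simp
      · rw [st_succ, hst]
        simp only [Bool.not_true, Bool.false_eq_true, iff_false]
        intro h
        rcases Finset.mem_insert.1 h with h | h
        · exact absurd h (by simp [topEdge, rightEdge])
        · exact htop'P h
      · rw [st_succ, hst]
        simp only [Bool.not_true, iff_true]
        exact Finset.mem_insert_self _ _
      · rw [← ih5]
        constructor
        · intro h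
          rcases Finset.mem_insert.1 h with h | h
          · exact absurd h (by simp [bottomEdge, rightEdge])
          · exact h
        · exact fun h => Finset.mem_insert_of_mem h
      · rw [← ih6]
        constructor
        · intro h
          rcases Finset.mem_insert.1 h with h | h
          · refine absurd h ?_
            apply ne_of_sum
            simp [leftEdge, rightEdge]
            omega
          · exact h
        · exact fun h => Finset.mem_insert_of_mem h
    | false =>
      have hrightP : rightEdge (pos f n) ∈ build f b n := ih4.mpr hst
      have hbot'P : bottomEdge (pos f (n + 1)) ∉ build f b n := by
        intro h
        refine new_tile_only hn ?_ ?_ (hPsub h)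
        · simp [mem_tileEdges, bottomEdge]
        · rw [hshared_eq]; simp [bottomEdge, rightEdge]
      rw [if_neg (by simp)]
      refine ⟨?_, ?_, ?_, ?_, ?_, ?_⟩
      · intro e he
        rcases Finset.mem_union.1 he with he | he
        · exact old_boundary_succ (ih1 e (Finset.mem_of_mem_erase he))
            (by rw [hshared_eq]; exact Finset.ne_of_mem_erase he)
        · simp only [Finset.mem_insert, Finset.mem_singleton] at he
          rcases he with rfl | rfl
          · exact new_tile_boundary hn (by simp [mem_tileEdges, bottomEdge])
              (by rw [hshared_eq]; simp [bottomEdge, rightEdge])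
          · exact new_tile_boundary hn (by simp [mem_tileEdges, topEdge])
              (by rw [hshared_eq]; simp [topEdge, rightEdge])
      · intro v hv
        rw [snakeVertices_succ] at hv
        rw [Finset.filter_union, Finset.filter_erase]
        by_cases hvold : v ∈ snakeVertices n f
        · by_cases hv1 : v = pos f (n + 1)
          · subst hv1
            have hold : (build f b n).filter
                (fun e => pos f (n + 1) ∈ endpoints e) = {rightEdge (pos f n)} :=
              eq_singleton_of_card (ih2 _ hvold) (Finset.mem_filter.2 ⟨hrightP, he_R1⟩)
            have hno : pos f (n + 1) ∉ endpoints (topEdge (pos f (n + 1))) :=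
              he_t3' _ hd1 hd3
            rw [hold, Finset.erase_singleton, Finset.empty_union, Finset.filter_insert,
              if_pos he_b1, Finset.filter_singleton, if_neg hno]
            simp
          · by_cases hv2 : v = pos f (n + 1) + (0, 1)
            · subst hv2
              have hold : (build f b n).filter
                  (fun e => pos f (n + 1) + (0, 1) ∈ endpoints e) = {rightEdge (pos f n)} :=
                eq_singleton_of_card (ih2 _ hvold) (Finset.mem_filter.2 ⟨hrightP, he_R2⟩)
              have hno : pos f (n + 1) + (0, 1) ∉ endpoints (bottomEdge (pos f (n + 1))) :=
                he_b3 _ (fun h => hd1 h.symm) hd7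
              rw [hold, Finset.erase_singleton, Finset.empty_union, Finset.filter_insert,
                if_neg hno, Finset.filter_singleton, if_pos he_t1']
              simp
            · have hne1 : v ≠ pos f (n + 1) + (1, 0) := fun h => hv1n (h ▸ hvold)
              have hne2 : v ≠ pos f (n + 1) + (1, 1) := fun h => hv2n (h ▸ hvold)
              have h1 := he_R3 v hv1 hv2
              have h2 := he_b3 v hv1 hne1
              have h3 := he_t3' v hv2 hne2
              have hpair : ({bottomEdge (pos f (n + 1)), topEdge (pos f (n + 1))} :
                  Finset Edge).filter (fun e => v ∈ endpoints e) = ∅ := by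
                rw [Finset.filter_insert, if_neg h2, Finset.filter_singleton, if_neg h3]
              have hnot : rightEdge (pos f n) ∉
                  (build f b n).filter (fun e => v ∈ endpoints e) :=
                fun h => h1 (Finset.mem_filter.1 h).2
              rw [hpair, Finset.union_empty, Finset.erase_eq_of_notMem hnot]
              exact ih2 v hvold
        · have hPf : (build f b n).filter (fun e => v ∈ endpoints e) = ∅ :=
            cov_empty hPsub hvold
          rw [hPf]
          rcases Finset.mem_union.1 hv with hv | hv
          swap
          · exact absurd hv hvold
          rcases mem_tileCorners.1 hv with rfl | rfl | rfl | rfl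
          · exact absurd hpv hvold
          · have hno : pos f (n + 1) + (1, 0) ∉ endpoints (topEdge (pos f (n + 1))) :=
              he_t3' _ hd4 hd5
            rw [Finset.erase_empty, Finset.empty_union, Finset.filter_insert,
              if_pos he_b2, Finset.filter_singleton, if_neg hno]
            simp
          · exact absurd hqv hvold
          · have hno : pos f (n + 1) + (1, 1) ∉ endpoints (bottomEdge (pos f (n + 1))) :=
              he_b3 _ (fun h => hd3 h.symm) (fun h => hd5 h.symm)
            rw [Finset.erase_empty, Finset.empty_union, Finset.filter_insert,
              if_neg hno, Finset.filter_singleton, if_pos he_t2']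
            simp
      · rw [st_succ, hst]
        simp only [Bool.not_false, iff_true]
        exact Finset.mem_union_right _ (by simp)
      · rw [st_succ, hst]
        simp only [Bool.not_false, Bool.true_eq_false, iff_false]
        intro h
        rcases Finset.mem_union.1 h with h | h
        · exact hright'P (Finset.mem_of_mem_erase h)
        · simp only [Finset.mem_insert, Finset.mem_singleton] at h
          rcases h with h | h
          · exact absurd h (by simp [rightEdge, bottomEdge])
          · exact absurd h (by simp [rightEdge, topEdge])
      · rw [← ih5]
        constructor
        · intro h
          rcases Finset.mem_union.1 h with h | h
          · exact Finset.mem_of_mem_erase h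
          · simp only [Finset.mem_insert, Finset.mem_singleton] at h
            rcases h with h | h
            · refine absurd h ?_
              apply ne_of_sum
              simp [bottomEdge]
              omega
            · refine absurd h ?_
              apply ne_of_sum
              simp [bottomEdge, topEdge]
              omega
        · intro h
          exact Finset.mem_union_left _
            (Finset.mem_erase.2 ⟨by simp [bottomEdge, rightEdge], h⟩)
      · rw [← ih6]
        constructor
        · intro h
          rcases Finset.mem_union.1 h with h | h
          · exact Finset.mem_of_mem_erase h
          · simp only [Finset.mem_insert, Finset.mem_singleton] at h
            rcases h with h | h
            · exact absurd h (by simp [leftEdge, bottomEdge])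
            · exact absurd h (by simp [leftEdge, topEdge])
        · intro h
          refine Finset.mem_union_left _ (Finset.mem_erase.2 ⟨?_, h⟩)
          apply ne_of_sum
          simp [leftEdge, rightEdge]
          omega

end SnakeAux
namespace SnakeAux

lemma cover_exists {P : Finset Edge} {v : ℤ × ℤ}
    (h : (P.filter fun e => v ∈ endpoints e).card = 1) :
    ∃ e ∈ P, v ∈ endpoints e := by
  obtain ⟨e, he⟩ := Finset.card_eq_one.mp h
  have : e ∈ P.filter fun e => v ∈ endpoints e := by rw [he]; exact Finset.mem_singleton_self e
  rw [Finset.mem_filter] at this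
  exact ⟨e, this.1, this.2⟩

lemma cover_unique {P : Finset Edge} {v : ℤ × ℤ}
    (h : (P.filter fun e => v ∈ endpoints e).card = 1) {e : Edge}
    (heP : e ∈ P) (hev : v ∈ endpoints e) :
    ∀ e' ∈ P, v ∈ endpoints e' → e' = e := by
  have hs := eq_singleton_of_card h (Finset.mem_filter.2 ⟨heP, hev⟩)
  intro e' h1 h2
  have : e' ∈ P.filter fun e => v ∈ endpoints e := Finset.mem_filter.2 ⟨h1, h2⟩
  rw [hs, Finset.mem_singleton] at this
  exact this

lemma build_unique (f : ℕ → Bool) : ∀ d, 1 ≤ d → ∀ P : Finset Edge,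
    IsPerfectMatching d f P → (∀ e ∈ P, IsBoundaryEdge d f e) →
    P = build f true d ∨ P = build f false d := by
  refine Nat.le_induction ?_ ?_
  · -- base case d = 1
    intro P hPM hbd
    obtain ⟨hsub, hcov⟩ := hPM
    rw [snakeEdges_one] at hsub
    have hv00 : ((0 : ℤ), (0 : ℤ)) ∈ snakeVertices 1 f := by
      rw [snakeVertices_one]; exact mem_tileCorners.2 (Or.inl rfl)
    have hv01 : ((0 : ℤ), (1 : ℤ)) ∈ snakeVertices 1 f := by
      rw [snakeVertices_one]; refine mem_tileCorners.2 (Or.inr (Or.inr (Or.inl (by decide))))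
    have hv10 : ((1 : ℤ), (0 : ℤ)) ∈ snakeVertices 1 f := by
      rw [snakeVertices_one]; refine mem_tileCorners.2 (Or.inr (Or.inl (by decide)))
    have hv11 : ((1 : ℤ), (1 : ℤ)) ∈ snakeVertices 1 f := by
      rw [snakeVertices_one]; refine mem_tileCorners.2 (Or.inr (Or.inr (Or.inr (by decide))))
    obtain ⟨e0, he0P, he0v⟩ := cover_exists (hcov _ hv00)
    have he0t := hsub he0P
    rcases mem_tileEdges.1 he0t with rfl | rfl | rfl | rfl
    · -- bottom edge of tile 1 is in P
      left
      have hlno : ((0, 0), false) ∉ P := by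
        intro h
        have := cover_unique (hcov _ hv00) he0P he0v _ h (by decide)
        exact absurd this (by decide)
      obtain ⟨e1, he1P, he1v⟩ := cover_exists (hcov _ hv01)
      have he1t := hsub he1P
      rcases mem_tileEdges.1 he1t with rfl | rfl | rfl | rfl
      · exact absurd he1v (by decide)
      · -- top edge in P
        have hrno : ((1, 0), false) ∉ P := by
          intro h
          have := cover_unique (hcov _ hv11) he1P (by decide) _ h (by decide)
          exact absurd this (by decide)
        rw [build_one, if_pos rfl]
        ext e
        simp only [Finset.mem_insert, Finset.mem_singleton, bottomEdge, topEdge]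
        constructor
        · intro heP
          have := hsub heP
          rcases mem_tileEdges.1 this with rfl | rfl | rfl | rfl
          · left; decide
          · right; decide
          · exact absurd heP hlno
          · exact absurd heP hrno
        · rintro (rfl | rfl)
          · exact he0P
          · exact he1P
      · exact absurd he1P hlno
      · exact absurd he1v (by decide)
    · exact absurd he0v (by decide)
    · -- left edge of tile 1 is in P
      right
      have hbno : ((0, 0), true) ∉ P := by
        intro h
        have := cover_unique (hcov _ hv00) he0P he0v _ h (by decide)
        exact absurd this (by decide)
      obtain ⟨e1, he1P, he1v⟩ := cover_exists (hcov _ hv10)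
      have he1t := hsub he1P
      rcases mem_tileEdges.1 he1t with rfl | rfl | rfl | rfl
      · exact absurd he1P hbno
      · exact absurd he1v (by decide)
      · exact absurd he1v (by decide)
      · -- right edge in P
        have htno : ((0, 1), true) ∉ P := by
          intro h
          have := cover_unique (hcov _ hv01) he0P (by decide) _ h (by decide)
          exact absurd this (by decide)
        rw [build_one, if_neg (by simp)]
        ext e
        simp only [Finset.mem_insert, Finset.mem_singleton, leftEdge, rightEdge]
        constructor
        · intro heP
          have := hsub heP
          rcases mem_tileEdges.1 this with rfl | rfl | rfl | rfl
          · exact absurd heP hbno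
          · exact absurd heP htno
          · left; rfl
          · right; decide
        · rintro (rfl | rfl)
          · exact he0P
          · exact he1P
    · exact absurd he0v (by decide)
  · -- induction step
    intro n hn IH P hPM hbd
    obtain ⟨hsub, hcov⟩ := hPM
    have hsp := pos_sum f n hn
    have hsp' := pos_sum f (n + 1) (by omega)
    have hsharedP : sharedE f n ∉ P := fun h => sharedE_not_boundary hn le_rfl (hbd _ h)
    have hd1 : pos f (n + 1) ≠ pos f (n + 1) + (0, 1) := by
      simp only [ne_eq, Prod.ext_iff, Prod.fst_add, Prod.snd_add, not_and]; intro h; omega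
    have hd2 : pos f (n + 1) ≠ pos f (n + 1) + (1, 0) := by
      simp only [ne_eq, Prod.ext_iff, Prod.fst_add, Prod.snd_add, not_and]; intro h; omega
    have hd3 : pos f (n + 1) ≠ pos f (n + 1) + (1, 1) := by
      simp only [ne_eq, Prod.ext_iff, Prod.fst_add, Prod.snd_add, not_and]; intro h; omega
    have hd4 : pos f (n + 1) + (1, 0) ≠ pos f (n + 1) + (0, 1) := by
      simp only [ne_eq, Prod.ext_iff, Prod.fst_add, Prod.snd_add, not_and]; intro h; omega
    have hd5 : pos f (n + 1) + (1, 0) ≠ pos f (n + 1) + (1, 1) := by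
      simp only [ne_eq, Prod.ext_iff, Prod.fst_add, Prod.snd_add, not_and]; intro h; omega
    have hd6 : pos f (n + 1) + (0, 1) ≠ pos f (n + 1) + (1, 1) := by
      simp only [ne_eq, Prod.ext_iff, Prod.fst_add, Prod.snd_add, not_and]; intro h; omega
    have hd7 : pos f (n + 1) + (0, 1) ≠ pos f (n + 1) + (1, 0) := fun h => hd4 h.symm
    have he_b1 : pos f (n + 1) ∈ endpoints (bottomEdge (pos f (n + 1))) := by
      rw [endpoints_bottom]; simp
    have he_b2 : pos f (n + 1) + (1, 0) ∈ endpoints (bottomEdge (pos f (n + 1))) := by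
      rw [endpoints_bottom]; simp
    have he_b3 : ∀ v : ℤ × ℤ, v ≠ pos f (n + 1) → v ≠ pos f (n + 1) + (1, 0) →
        v ∉ endpoints (bottomEdge (pos f (n + 1))) := by
      intro v h1 h2
      rw [endpoints_bottom]
      simp only [Finset.mem_insert, Finset.mem_singleton]
      rintro (rfl | rfl); exacts [h1 rfl, h2 rfl]
    have he_l1 : pos f (n + 1) ∈ endpoints (leftEdge (pos f (n + 1))) := by
      rw [endpoints_left]; simp
    have he_l2 : pos f (n + 1) + (0, 1) ∈ endpoints (leftEdge (pos f (n + 1))) := by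
      rw [endpoints_left]; simp
    have he_l3 : ∀ v : ℤ × ℤ, v ≠ pos f (n + 1) → v ≠ pos f (n + 1) + (0, 1) →
        v ∉ endpoints (leftEdge (pos f (n + 1))) := by
      intro v h1 h2
      rw [endpoints_left]
      simp only [Finset.mem_insert, Finset.mem_singleton]
      rintro (rfl | rfl); exacts [h1 rfl, h2 rfl]
    have he_r1 : pos f (n + 1) + (1, 0) ∈ endpoints (rightEdge (pos f (n + 1))) := by
      rw [endpoints_right]; simp
    have he_r2 : pos f (n + 1) + (1, 1) ∈ endpoints (rightEdge (pos f (n + 1))) := by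
      rw [endpoints_right]; simp
    have he_r3 : ∀ v : ℤ × ℤ, v ≠ pos f (n + 1) + (1, 0) → v ≠ pos f (n + 1) + (1, 1) →
        v ∉ endpoints (rightEdge (pos f (n + 1))) := by
      intro v h1 h2
      rw [endpoints_right]
      simp only [Finset.mem_insert, Finset.mem_singleton]
      rintro (rfl | rfl); exacts [h1 rfl, h2 rfl]
    have he_t1' : pos f (n + 1) + (0, 1) ∈ endpoints (topEdge (pos f (n + 1))) := by
      rw [endpoints_top]; simp
    have he_t2' : pos f (n + 1) + (1, 1) ∈ endpoints (topEdge (pos f (n + 1))) := by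
      rw [endpoints_top]; simp
    have he_t3' : ∀ v : ℤ × ℤ, v ≠ pos f (n + 1) + (0, 1) → v ≠ pos f (n + 1) + (1, 1) →
        v ∉ endpoints (topEdge (pos f (n + 1))) := by
      intro v h1 h2
      rw [endpoints_top]
      simp only [Finset.mem_insert, Finset.mem_singleton]
      rintro (rfl | rfl); exacts [h1 rfl, h2 rfl]
    have hc1 : pos f (n + 1) ∈ snakeVertices (n + 1) f :=
      mem_snakeVertices.2 ⟨n + 1, by omega, le_rfl, mem_tileCorners.2 (Or.inl rfl)⟩
    have hc2 : pos f (n + 1) + (1, 0) ∈ snakeVertices (n + 1) f :=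
      mem_snakeVertices.2 ⟨n + 1, by omega, le_rfl, mem_tileCorners.2 (Or.inr (Or.inl rfl))⟩
    have hc3 : pos f (n + 1) + (0, 1) ∈ snakeVertices (n + 1) f :=
      mem_snakeVertices.2 ⟨n + 1, by omega, le_rfl,
        mem_tileCorners.2 (Or.inr (Or.inr (Or.inl rfl)))⟩
    have hc4 : pos f (n + 1) + (1, 1) ∈ snakeVertices (n + 1) f :=
      mem_snakeVertices.2 ⟨n + 1, by omega, le_rfl,
        mem_tileCorners.2 (Or.inr (Or.inr (Or.inr rfl)))⟩
    cases hf : f n with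
    | true =>
      have hp' : pos f (n + 1) = pos f n + (0, 1) := by rw [pos_succ f hn, hf]; rfl
      have hshared_eq : sharedE f n = topEdge (pos f n) := by simp [sharedE, hf]
      have hbot' : bottomEdge (pos f (n + 1)) = topEdge (pos f n) := by rw [hp']; rfl
      have hv1n : pos f (n + 1) + (0, 1) ∉ snakeVertices n f := by
        apply not_mem_snakeVertices_mid
        · simp only [Prod.fst_add, Prod.snd_add]; omega
        · rw [hp']; simp only [ne_eq, Prod.ext_iff, Prod.fst_add, Prod.snd_add, not_and]
          intro h; omega
      have hv2n : pos f (n + 1) + (1, 1) ∉ snakeVertices n f := by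
        apply not_mem_snakeVertices_hi
        simp only [Prod.fst_add, Prod.snd_add]; omega
      have he_t1 : pos f (n + 1) ∈ endpoints (topEdge (pos f n)) := by
        rw [← hbot', endpoints_bottom]; simp
      have he_t2 : pos f (n + 1) + (1, 0) ∈ endpoints (topEdge (pos f n)) := by
        rw [← hbot', endpoints_bottom]; simp
      have he_t3 : ∀ v : ℤ × ℤ, v ≠ pos f (n + 1) → v ≠ pos f (n + 1) + (1, 0) →
          v ∉ endpoints (topEdge (pos f n)) := by
        intro v h1 h2
        rw [← hbot', endpoints_bottom]
        simp only [Finset.mem_insert, Finset.mem_singleton]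
        rintro (rfl | rfl); exacts [h1 rfl, h2 rfl]
      have hbotno : bottomEdge (pos f (n + 1)) ∉ P := by
        rw [hbot', ← hshared_eq]; exact hsharedP
      have htoppno : topEdge (pos f n) ∉ P := by rw [← hshared_eq]; exact hsharedP
      obtain ⟨e, heP, hev⟩ := cover_exists (hcov _ hc3)
      have het : e ∈ tileEdges (pos f (n + 1)) := cover_in_new_tile (hsub heP) hev hv1n
      rcases mem_tileEdges.1 het with rfl | rfl | rfl | rfl
      · exact absurd hev (he_b3 _ (fun h => hd1 h.symm) hd7)
      · -- topEdge (pos f (n+1)) ∈ P : P restricted is build with st = false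
        have heP' : topEdge (pos f (n + 1)) ∈ P := heP
        have huniq1 := cover_unique (hcov _ hc3) heP hev
        have hlno : leftEdge (pos f (n + 1)) ∉ P := fun h =>
          absurd (huniq1 _ h he_l2) (by simp [leftEdge, topEdge])
        have huniq2 := cover_unique (hcov _ hc4) heP he_t2'
        have hrno : rightEdge (pos f (n + 1)) ∉ P := fun h =>
          absurd (huniq2 _ h he_r2) (by simp [rightEdge, topEdge])
        have hbd' : ∀ e' ∈ P.erase (topEdge (pos f (n + 1))), IsBoundaryEdge n f e' := by
          intro e' he'
          have he'P := Finset.mem_of_mem_erase he'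
          have hne := Finset.ne_of_mem_erase he'
          refine (isBoundary_succ_iff ?_).mp (hbd _ he'P)
          intro hmem
          rcases mem_tileEdges.1 hmem with rfl | rfl | rfl | rfl
          · exact hbotno he'P
          · exact hne rfl
          · exact hlno he'P
          · exact hrno he'P
        have hcov' : ∀ v ∈ snakeVertices n f,
            ((P.erase (topEdge (pos f (n + 1)))).filter fun e => v ∈ endpoints e).card = 1 := by
          intro v hvold
          have hne1 : v ≠ pos f (n + 1) + (0, 1) := fun h => hv1n (h ▸ hvold)
          have hne2 : v ≠ pos f (n + 1) + (1, 1) := fun h => hv2n (h ▸ hvold)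
          have hnot : topEdge (pos f (n + 1)) ∉ P.filter (fun e => v ∈ endpoints e) :=
            fun h => he_t3' v hne1 hne2 (Finset.mem_filter.1 h).2
          rw [Finset.filter_erase, Finset.erase_eq_of_notMem hnot]
          exact hcov v (snakeVertices_mono n f hvold)
        have hfin : ∀ b : Bool, P.erase (topEdge (pos f (n + 1))) = build f b n →
            P = build f b (n + 1) := by
          intro b hb
          have hstb : st b n = false := by
            have h3 := (build_spec f b n hn).2.2.1
            rw [← hb] at h3
            cases hq : st b n with
            | false => rfl
            | true => exact absurd (Finset.mem_of_mem_erase (h3.mpr hq)) htoppno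
          rw [build_succ f b hn, hf, if_pos rfl, hstb, if_neg (by simp), ← hb,
            Finset.insert_erase heP']
        rcases IH _ ⟨fun e' he' => boundary_mem_snakeEdges (hbd' e' he'), hcov'⟩ hbd'
          with hB | hB
        · exact Or.inl (hfin true hB)
        · exact Or.inr (hfin false hB)
      · -- leftEdge (pos f (n+1)) ∈ P : P restricted is build with st = true
        have huniq1 := cover_unique (hcov _ hc3) heP hev
        have htopno : topEdge (pos f (n + 1)) ∉ P := fun h =>
          absurd (huniq1 _ h he_t1') (by simp [topEdge, leftEdge])
        obtain ⟨e2, he2P, he2v⟩ := cover_exists (hcov _ hc4)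
        have he2t := cover_in_new_tile (hsub he2P) he2v hv2n
        have hrP : rightEdge (pos f (n + 1)) ∈ P := by
          rcases mem_tileEdges.1 he2t with rfl | rfl | rfl | rfl
          · exact absurd he2v (he_b3 _ (fun h => hd3 h.symm) (fun h => hd5 h.symm))
          · exact absurd he2P htopno
          · exact absurd he2v (he_l3 _ (fun h => hd3 h.symm) (fun h => hd6 h.symm))
          · exact he2P
        have hbd' : ∀ e' ∈ insert (topEdge (pos f n))
            ((P.erase (leftEdge (pos f (n + 1)))).erase (rightEdge (pos f (n + 1)))),
            IsBoundaryEdge n f e' := by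
          intro e' he'
          rcases Finset.mem_insert.1 he' with rfl | he'
          · refine boundary_of_last hn (mem_tileEdges.2 (Or.inr (Or.inl rfl))) ?_
            simp only [topEdge, Prod.fst_add, Prod.snd_add]
            omega
          · have hner := Finset.ne_of_mem_erase he'
            have he'2 := Finset.mem_of_mem_erase he'
            have hnel := Finset.ne_of_mem_erase he'2
            have he'P := Finset.mem_of_mem_erase he'2
            refine (isBoundary_succ_iff ?_).mp (hbd _ he'P)
            intro hmem
            rcases mem_tileEdges.1 hmem with rfl | rfl | rfl | rfl
            · exact hbotno he'P
            · exact htopno he'P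
            · exact hnel rfl
            · exact hner rfl
        have hcov' : ∀ v ∈ snakeVertices n f, ((insert (topEdge (pos f n))
            ((P.erase (leftEdge (pos f (n + 1)))).erase (rightEdge (pos f (n + 1))))).filter
              fun e => v ∈ endpoints e).card = 1 := by
          intro v hvold
          rw [Finset.filter_insert]
          by_cases hv1 : v = pos f (n + 1)
          · subst hv1
            have h1 : P.filter (fun e => pos f (n + 1) ∈ endpoints e)
                = {leftEdge (pos f (n + 1))} :=
              eq_singleton_of_card (hcov _ (snakeVertices_mono n f hvold))
                (Finset.mem_filter.2 ⟨heP, he_l1⟩)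
            rw [if_pos he_t1, Finset.filter_erase, Finset.filter_erase, h1,
              Finset.erase_singleton, Finset.erase_empty]
            simp
          · by_cases hv2 : v = pos f (n + 1) + (1, 0)
            · subst hv2
              have h1 : P.filter (fun e => pos f (n + 1) + (1, 0) ∈ endpoints e)
                  = {rightEdge (pos f (n + 1))} :=
                eq_singleton_of_card (hcov _ (snakeVertices_mono n f hvold))
                  (Finset.mem_filter.2 ⟨hrP, he_r1⟩)
              have hlr : leftEdge (pos f (n + 1)) ∉
                  ({rightEdge (pos f (n + 1))} : Finset Edge) := by
                simp only [Finset.mem_singleton]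
                apply ne_of_sum
                simp [leftEdge, rightEdge]
              rw [if_pos he_t2, Finset.filter_erase, Finset.filter_erase, h1,
                Finset.erase_eq_of_notMem hlr, Finset.erase_singleton]
              simp
            · have hne1 : v ≠ pos f (n + 1) + (0, 1) := fun h => hv1n (h ▸ hvold)
              have hne2 : v ≠ pos f (n + 1) + (1, 1) := fun h => hv2n (h ▸ hvold)
              have h1 : v ∉ endpoints (topEdge (pos f n)) := he_t3 v hv1 hv2
              have h2 : leftEdge (pos f (n + 1)) ∉ P.filter (fun e => v ∈ endpoints e) :=
                fun h => he_l3 v hv1 hne1 (Finset.mem_filter.1 h).2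
              have h3 : rightEdge (pos f (n + 1)) ∉ P.filter (fun e => v ∈ endpoints e) :=
                fun h => he_r3 v hv2 hne2 (Finset.mem_filter.1 h).2
              rw [if_neg h1, Finset.filter_erase, Finset.filter_erase,
                Finset.erase_eq_of_notMem h2, Finset.erase_eq_of_notMem h3]
              exact hcov v (snakeVertices_mono n f hvold)
        have hfin : ∀ b : Bool, insert (topEdge (pos f n))
            ((P.erase (leftEdge (pos f (n + 1)))).erase (rightEdge (pos f (n + 1))))
              = build f b n → P = build f b (n + 1) := by
          intro b hb
          have hstb : st b n = true := by
            have h3 := (build_spec f b n hn).2.2.1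
            rw [← hb] at h3
            exact h3.mp (Finset.mem_insert_self _ _)
          rw [build_succ f b hn, hf, if_pos rfl, hstb, if_pos rfl, ← hb]
          have htno : topEdge (pos f n) ∉
              (P.erase (leftEdge (pos f (n + 1)))).erase (rightEdge (pos f (n + 1))) :=
            fun h => htoppno (Finset.mem_of_mem_erase (Finset.mem_of_mem_erase h))
          rw [Finset.erase_insert htno]
          ext e'
          simp only [Finset.mem_union, Finset.mem_erase, Finset.mem_insert,
            Finset.mem_singleton]
          constructor
          · intro h
            by_cases h1 : e' = leftEdge (pos f (n + 1))
            · exact Or.inr (Or.inl h1)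
            · by_cases h2 : e' = rightEdge (pos f (n + 1))
              · exact Or.inr (Or.inr h2)
              · exact Or.inl ⟨h2, h1, h⟩
          · rintro (⟨h1, h2, h3⟩ | rfl | rfl)
            exacts [h3, heP, hrP]
        rcases IH _ ⟨fun e' he' => boundary_mem_snakeEdges (hbd' e' he'), hcov'⟩ hbd'
          with hB | hB
        · exact Or.inl (hfin true hB)
        · exact Or.inr (hfin false hB)
      · exact absurd hev (he_r3 _ hd7 hd6)
    | false =>
      have hp' : pos f (n + 1) = pos f n + (1, 0) := by rw [pos_succ f hn, hf]; rfl
      have hshared_eq : sharedE f n = rightEdge (pos f n) := by simp [sharedE, hf]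
      have hleft' : leftEdge (pos f (n + 1)) = rightEdge (pos f n) := by rw [hp']; rfl
      have hv1n : pos f (n + 1) + (1, 0) ∉ snakeVertices n f := by
        apply not_mem_snakeVertices_mid
        · simp only [Prod.fst_add, Prod.snd_add]; omega
        · rw [hp']; simp only [ne_eq, Prod.ext_iff, Prod.fst_add, Prod.snd_add, not_and]
          intro h; omega
      have hv2n : pos f (n + 1) + (1, 1) ∉ snakeVertices n f := by
        apply not_mem_snakeVertices_hi
        simp only [Prod.fst_add, Prod.snd_add]; omega
      have he_R1 : pos f (n + 1) ∈ endpoints (rightEdge (pos f n)) := by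
        rw [← hleft', endpoints_left]; simp
      have he_R2 : pos f (n + 1) + (0, 1) ∈ endpoints (rightEdge (pos f n)) := by
        rw [← hleft', endpoints_left]; simp
      have he_R3 : ∀ v : ℤ × ℤ, v ≠ pos f (n + 1) → v ≠ pos f (n + 1) + (0, 1) →
          v ∉ endpoints (rightEdge (pos f n)) := by
        intro v h1 h2
        rw [← hleft', endpoints_left]
        simp only [Finset.mem_insert, Finset.mem_singleton]
        rintro (rfl | rfl); exacts [h1 rfl, h2 rfl]
      have hlno : leftEdge (pos f (n + 1)) ∉ P := by
        rw [hleft', ← hshared_eq]; exact hsharedP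
      have hrightpno : rightEdge (pos f n) ∉ P := by rw [← hshared_eq]; exact hsharedP
      obtain ⟨e, heP, hev⟩ := cover_exists (hcov _ hc2)
      have het : e ∈ tileEdges (pos f (n + 1)) := cover_in_new_tile (hsub heP) hev hv1n
      rcases mem_tileEdges.1 het with rfl | rfl | rfl | rfl
      · -- bottomEdge (pos f (n+1)) ∈ P : st = false situation
        have huniq1 := cover_unique (hcov _ hc2) heP hev
        have hrno : rightEdge (pos f (n + 1)) ∉ P := fun h =>
          absurd (huniq1 _ h he_r1) (by simp [rightEdge, bottomEdge])
        obtain ⟨e2, he2P, he2v⟩ := cover_exists (hcov _ hc4)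
        have he2t := cover_in_new_tile (hsub he2P) he2v hv2n
        have htP : topEdge (pos f (n + 1)) ∈ P := by
          rcases mem_tileEdges.1 he2t with rfl | rfl | rfl | rfl
          · exact absurd he2v (he_b3 _ (fun h => hd3 h.symm) (fun h => hd5 h.symm))
          · exact he2P
          · exact absurd he2v (he_l3 _ (fun h => hd3 h.symm) (fun h => hd6 h.symm))
          · exact absurd he2P hrno
        have hbd' : ∀ e' ∈ insert (rightEdge (pos f n))
            ((P.erase (bottomEdge (pos f (n + 1)))).erase (topEdge (pos f (n + 1)))),
            IsBoundaryEdge n f e' := by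
          intro e' he'
          rcases Finset.mem_insert.1 he' with rfl | he'
          · refine boundary_of_last hn (mem_tileEdges.2 (Or.inr (Or.inr (Or.inr rfl)))) ?_
            simp only [rightEdge, Prod.fst_add, Prod.snd_add]
            omega
          · have hnet := Finset.ne_of_mem_erase he'
            have he'2 := Finset.mem_of_mem_erase he'
            have hneb := Finset.ne_of_mem_erase he'2
            have he'P := Finset.mem_of_mem_erase he'2
            refine (isBoundary_succ_iff ?_).mp (hbd _ he'P)
            intro hmem
            rcases mem_tileEdges.1 hmem with rfl | rfl | rfl | rfl
            · exact hneb rfl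
            · exact hnet rfl
            · exact hlno he'P
            · exact hrno he'P
        have hcov' : ∀ v ∈ snakeVertices n f, ((insert (rightEdge (pos f n))
            ((P.erase (bottomEdge (pos f (n + 1)))).erase (topEdge (pos f (n + 1))))).filter
              fun e => v ∈ endpoints e).card = 1 := by
          intro v hvold
          rw [Finset.filter_insert]
          by_cases hv1 : v = pos f (n + 1)
          · subst hv1
            have h1 : P.filter (fun e => pos f (n + 1) ∈ endpoints e)
                = {bottomEdge (pos f (n + 1))} :=
              eq_singleton_of_card (hcov _ (snakeVertices_mono n f hvold))
                (Finset.mem_filter.2 ⟨heP, he_b1⟩)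
            rw [if_pos he_R1, Finset.filter_erase, Finset.filter_erase, h1,
              Finset.erase_singleton, Finset.erase_empty]
            simp
          · by_cases hv2 : v = pos f (n + 1) + (0, 1)
            · subst hv2
              have h1 : P.filter (fun e => pos f (n + 1) + (0, 1) ∈ endpoints e)
                  = {topEdge (pos f (n + 1))} :=
                eq_singleton_of_card (hcov _ (snakeVertices_mono n f hvold))
                  (Finset.mem_filter.2 ⟨htP, he_t1'⟩)
              have hbt : bottomEdge (pos f (n + 1)) ∉
                  ({topEdge (pos f (n + 1))} : Finset Edge) := by
                simp only [Finset.mem_singleton]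
                apply ne_of_sum
                simp [bottomEdge, topEdge]
              rw [if_pos he_R2, Finset.filter_erase, Finset.filter_erase, h1,
                Finset.erase_eq_of_notMem hbt, Finset.erase_singleton]
              simp
            · have hne1 : v ≠ pos f (n + 1) + (1, 0) := fun h => hv1n (h ▸ hvold)
              have hne2 : v ≠ pos f (n + 1) + (1, 1) := fun h => hv2n (h ▸ hvold)
              have h1 : v ∉ endpoints (rightEdge (pos f n)) := he_R3 v hv1 hv2
              have h2 : bottomEdge (pos f (n + 1)) ∉ P.filter (fun e => v ∈ endpoints e) :=
                fun h => he_b3 v hv1 hne1 (Finset.mem_filter.1 h).2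
              have h3 : topEdge (pos f (n + 1)) ∉ P.filter (fun e => v ∈ endpoints e) :=
                fun h => he_t3' v hv2 hne2 (Finset.mem_filter.1 h).2
              rw [if_neg h1, Finset.filter_erase, Finset.filter_erase,
                Finset.erase_eq_of_notMem h2, Finset.erase_eq_of_notMem h3]
              exact hcov v (snakeVertices_mono n f hvold)
        have hfin : ∀ b : Bool, insert (rightEdge (pos f n))
            ((P.erase (bottomEdge (pos f (n + 1)))).erase (topEdge (pos f (n + 1))))
              = build f b n → P = build f b (n + 1) := by
          intro b hb
          have hstb : st b n = false := by
            have h3 := (build_spec f b n hn).2.2.2.1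
            rw [← hb] at h3
            exact h3.mp (Finset.mem_insert_self _ _)
          rw [build_succ f b hn, hf, if_neg (by simp), hstb, if_neg (by simp), ← hb]
          have hrno2 : rightEdge (pos f n) ∉
              (P.erase (bottomEdge (pos f (n + 1)))).erase (topEdge (pos f (n + 1))) :=
            fun h => hrightpno (Finset.mem_of_mem_erase (Finset.mem_of_mem_erase h))
          rw [Finset.erase_insert hrno2]
          ext e'
          simp only [Finset.mem_union, Finset.mem_erase, Finset.mem_insert,
            Finset.mem_singleton]
          constructor
          · intro h
            by_cases h1 : e' = bottomEdge (pos f (n + 1))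
            · exact Or.inr (Or.inl h1)
            · by_cases h2 : e' = topEdge (pos f (n + 1))
              · exact Or.inr (Or.inr h2)
              · exact Or.inl ⟨h2, h1, h⟩
          · rintro (⟨h1, h2, h3⟩ | rfl | rfl)
            exacts [h3, heP, htP]
        rcases IH _ ⟨fun e' he' => boundary_mem_snakeEdges (hbd' e' he'), hcov'⟩ hbd'
          with hB | hB
        · exact Or.inl (hfin true hB)
        · exact Or.inr (hfin false hB)
      · exact absurd hev (he_t3' _ hd4 hd5)
      · exact absurd hev (he_l3 _ (fun h => hd2 h.symm) hd4)
      · -- rightEdge (pos f (n+1)) ∈ P : st = true situation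
        have heP' : rightEdge (pos f (n + 1)) ∈ P := heP
        have huniq1 := cover_unique (hcov _ hc2) heP hev
        have hbno : bottomEdge (pos f (n + 1)) ∉ P := fun h =>
          absurd (huniq1 _ h he_b2) (by simp [bottomEdge, rightEdge])
        have huniq2 := cover_unique (hcov _ hc4) heP he_r2
        have htno : topEdge (pos f (n + 1)) ∉ P := fun h =>
          absurd (huniq2 _ h he_t2') (by simp [topEdge, rightEdge])
        have hbd' : ∀ e' ∈ P.erase (rightEdge (pos f (n + 1))), IsBoundaryEdge n f e' := by
          intro e' he'
          have he'P := Finset.mem_of_mem_erase he'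
          have hne := Finset.ne_of_mem_erase he'
          refine (isBoundary_succ_iff ?_).mp (hbd _ he'P)
          intro hmem
          rcases mem_tileEdges.1 hmem with rfl | rfl | rfl | rfl
          · exact hbno he'P
          · exact htno he'P
          · exact hlno he'P
          · exact hne rfl
        have hcov' : ∀ v ∈ snakeVertices n f,
            ((P.erase (rightEdge (pos f (n + 1)))).filter fun e => v ∈ endpoints e).card
              = 1 := by
          intro v hvold
          have hne1 : v ≠ pos f (n + 1) + (1, 0) := fun h => hv1n (h ▸ hvold)
          have hne2 : v ≠ pos f (n + 1) + (1, 1) := fun h => hv2n (h ▸ hvold)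
          have hnot : rightEdge (pos f (n + 1)) ∉ P.filter (fun e => v ∈ endpoints e) :=
            fun h => he_r3 v hne1 hne2 (Finset.mem_filter.1 h).2
          rw [Finset.filter_erase, Finset.erase_eq_of_notMem hnot]
          exact hcov v (snakeVertices_mono n f hvold)
        have hfin : ∀ b : Bool, P.erase (rightEdge (pos f (n + 1))) = build f b n →
            P = build f b (n + 1) := by
          intro b hb
          have hstb : st b n = true := by
            have h3 := (build_spec f b n hn).2.2.2.1
            rw [← hb] at h3
            cases hq : st b n with
            | true => rfl
            | false => exact absurd (Finset.mem_of_mem_erase (h3.mpr hq)) hrightpno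
          rw [build_succ f b hn, hf, if_neg (by simp), hstb, if_pos rfl, ← hb,
            Finset.insert_erase heP']
        rcases IH _ ⟨fun e' he' => boundary_mem_snakeEdges (hbd' e' he'), hcov'⟩ hbd'
          with hB | hB
        · exact Or.inl (hfin true hB)
        · exact Or.inr (hfin false hB)

end SnakeAux

/-- **Existence and uniqueness of the minimal and maximal matchings**
(Definition 3.6 of Musiker–Williams).  For every `d ≥ 1` and direction word
`f`, the snake graph `G(f)` has exactly two perfect matchings consisting
entirely of boundary edges; exactly one of them contains the bottom edge of
tile 1 and the other contains the left edge of tile 1. -/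
theorem snake_graph_two_boundary_matchings (d : ℕ) (hd : 1 ≤ d) (f : ℕ → Bool) :
    ∃ P₁ P₂ : Finset Edge, P₁ ≠ P₂ ∧
      IsPerfectMatching d f P₁ ∧ (∀ e ∈ P₁, IsBoundaryEdge d f e) ∧
      IsPerfectMatching d f P₂ ∧ (∀ e ∈ P₂, IsBoundaryEdge d f e) ∧
      bottomEdge (0, 0) ∈ P₁ ∧ bottomEdge (0, 0) ∉ P₂ ∧
      leftEdge (0, 0) ∈ P₂ ∧ leftEdge (0, 0) ∉ P₁ ∧
      ∀ P : Finset Edge, IsPerfectMatching d f P →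
        (∀ e ∈ P, IsBoundaryEdge d f e) → P = P₁ ∨ P = P₂ := by
  obtain ⟨s1a, s1b, s1c, s1d, s1e, s1f⟩ := SnakeAux.build_spec f true d hd
  obtain ⟨s2a, s2b, s2c, s2d, s2e, s2f⟩ := SnakeAux.build_spec f false d hd
  have hbot1 : bottomEdge (0, 0) ∈ SnakeAux.build f true d := s1e.mpr rfl
  have hbot2 : bottomEdge (0, 0) ∉ SnakeAux.build f false d := by
    intro h; simpa using s2e.mp h
  have hleft2 : leftEdge (0, 0) ∈ SnakeAux.build f false d := s2f.mpr rfl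
  have hleft1 : leftEdge (0, 0) ∉ SnakeAux.build f true d := by
    intro h; simpa using s1f.mp h
  refine ⟨SnakeAux.build f true d, SnakeAux.build f false d, ?_,
    ⟨fun e he => SnakeAux.boundary_mem_snakeEdges (s1a e he), s1b⟩, s1a,
    ⟨fun e he => SnakeAux.boundary_mem_snakeEdges (s2a e he), s2b⟩, s2a,
    hbot1, hbot2, hleft2, hleft1, ?_⟩
  · intro h
    rw [h] at hbot1
    exact hbot2 hbot1
  · exact fun P hPM hb => SnakeAux.build_unique f d hd P hPM hb
end
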